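/- arXiv:2409.14397 — 3 statements merged into one kernel-verified Lean document; each statement's English description precedes it below -/
import Mathlib

section
/- Let A_S ∈ R^{d_S × R} and A_{S^c} ∈ R^{d_{S^c} × R} be matrices with unit-norm columns, W = diag(w_1,...,w_R) with w_1 ≥ ... ≥ w_R > 0, and let M = A_S W A_{S^c}^T. Define δ = max(‖A_S^T A_S − I_R‖_2, ‖A_{S^c}^T A_{S^c} − I_R‖_2). Then for each r, the r-th largest singular value λ_r of M satisfies |λ_r − w_r| ≤ √2 · δ · w_1. -/
/-!
The quadratic form of `MᵀM` is `x ↦ ‖A W Bᵀ x‖²`, and `A`, `B` are `δ`-near-isometries. On the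
subspace of `x` for which `Bᵀ x` vanishes on the first `r` coordinates (codimension at most `r`)
the form is at most `((1 + δ) w_r)² ‖x‖²`. On the image under `B` of the `y` for which `BᵀB y`
vanishes beyond coordinate `r` (dimension `r + 1`, as `B` is injective when `δ < 1`) it is at least
`((1 - δ) w_r)² ‖x‖²`, because `‖Bᵀ x‖² ≥ (1 - δ) ‖x‖²` on the range of `B`. By Courant–Fischer,
`(1 - δ) w_r ≤ λ_r ≤ (1 + δ) w_r`, i.e. `|λ_r - w_r| ≤ δ w_r ≤ √2 δ w_1`.
-/

open Matrix

noncomputable def specNorm {m n : Type*} [Fintype m] [Fintype n] [DecidableEq n]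
    (A : Matrix m n ℝ) : ℝ :=
  ‖LinearMap.toContinuousLinearMap (Matrix.toEuclideanLin A)‖

open Module Finset
open scoped RealInnerProductSpace

section FiniteDimensional
variable {K V : Type*} [DivisionRing K] [AddCommGroup V] [Module K V]

theorem Submodule.exists_ne_zero_mem_inf_of_finrank_lt [FiniteDimensional K V]
    {S T : Submodule K V} (h : finrank K V < finrank K S + finrank K T) :
    ∃ x ∈ S, x ∈ T ∧ x ≠ 0 := by
  by_contra! hST
  exact h.not_ge (Submodule.finrank_add_finrank_le_of_disjoint (Submodule.disjoint_def.mpr hST))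

theorem LinearIndependent.finrank_span_image_finset {ι : Type*} {u : ι → V}
    (hu : LinearIndependent K u) (s : Finset ι) : finrank K (Submodule.span K (u '' s)) = #s := by
  rw [Set.image_eq_range]
  exact (finrank_span_eq_card (hu.comp _ Subtype.val_injective)).trans (Fintype.card_coe s)

theorem LinearMap.finrank_sub_finrank_le_finrank_ker {W : Type*} [AddCommGroup W] [Module K W]
    [FiniteDimensional K V] [FiniteDimensional K W] (f : V →ₗ[K] W) :
    finrank K V - finrank K W ≤ finrank K (ker f) := by
  have := f.finrank_range_add_finrank_ker
  have := Submodule.finrank_le (range f)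
  omega

end FiniteDimensional

section Rayleigh
variable {E ι : Type*} [NormedAddCommGroup E] [InnerProductSpace ℝ E]
  {T : E →ₗ[ℝ] E} {u : ι → E} {ν : ι → ℝ}

theorem Orthonormal.inner_map_sum_smul (hu : Orthonormal ℝ u) (hTu : ∀ i, T (u i) = ν i • u i)
    (a : ι → ℝ) (s : Finset ι) :
    ⟪∑ i ∈ s, a i • u i, T (∑ i ∈ s, a i • u i)⟫ = ∑ i ∈ s, ν i * a i ^ 2 := by
  simp only [map_sum, map_smul, hTu, smul_smul]
  rw [hu.inner_sum]
  exact Finset.sum_congr rfl fun i _ => by simp; ring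

theorem Orthonormal.norm_sum_smul_sq (hu : Orthonormal ℝ u) (a : ι → ℝ) (s : Finset ι) :
    ‖∑ i ∈ s, a i • u i‖ ^ 2 = ∑ i ∈ s, a i ^ 2 := by
  rw [← real_inner_self_eq_norm_sq, hu.inner_sum]
  exact Finset.sum_congr rfl fun i _ => by simp; ring

theorem Orthonormal.inner_map_self_le_of_mem_span (hu : Orthonormal ℝ u)
    (hTu : ∀ i, T (u i) = ν i • u i) {s : Finset ι} {c : ℝ} (hc : ∀ i ∈ s, ν i ≤ c) {x : E}
    (hx : x ∈ Submodule.span ℝ (u '' s)) :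
    ⟪x, T x⟫ ≤ c * ‖x‖ ^ 2 := by
  obtain ⟨a, rfl⟩ := (Submodule.mem_span_image_finset_iff_exists_fun' ℝ).mp hx
  rw [hu.inner_map_sum_smul hTu, hu.norm_sum_smul_sq, Finset.mul_sum]
  exact Finset.sum_le_sum fun i hi => mul_le_mul_of_nonneg_right (hc i hi) (sq_nonneg _)

theorem Orthonormal.le_inner_map_self_of_mem_span (hu : Orthonormal ℝ u)
    (hTu : ∀ i, T (u i) = ν i • u i) {s : Finset ι} {c : ℝ} (hc : ∀ i ∈ s, c ≤ ν i) {x : E}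
    (hx : x ∈ Submodule.span ℝ (u '' s)) :
    c * ‖x‖ ^ 2 ≤ ⟪x, T x⟫ := by
  obtain ⟨a, rfl⟩ := (Submodule.mem_span_image_finset_iff_exists_fun' ℝ).mp hx
  rw [hu.inner_map_sum_smul hTu, hu.norm_sum_smul_sq, Finset.mul_sum]
  exact Finset.sum_le_sum fun i hi => mul_le_mul_of_nonneg_right (hc i hi) (sq_nonneg _)

end Rayleigh

section CourantFischer
variable {E : Type*} [NormedAddCommGroup E] [InnerProductSpace ℝ E] [FiniteDimensional ℝ E]
  {n : ℕ} {T : E →ₗ[ℝ] E} {μ : Fin n → ℝ}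

theorem le_eigenvalue_of_forall_le_inner (u : OrthonormalBasis (Fin n) ℝ E)
    (hμ : Antitone μ) (hTu : ∀ i, T (u i) = μ i • u i) {r : Fin n} {c : ℝ}
    {V : Submodule ℝ E} (hV : r + 1 ≤ finrank ℝ V) (hc : ∀ x ∈ V, c * ‖x‖ ^ 2 ≤ ⟪x, T x⟫) :
    c ≤ μ r := by
  have hU := u.orthonormal.linearIndependent.finrank_span_image_finset (Ici r)
  rw [Fin.card_Ici] at hU
  have hn := finrank_eq_card_basis u.toBasis
  rw [Fintype.card_fin] at hn
  obtain ⟨x, hxV, hxU, hx⟩ := Submodule.exists_ne_zero_mem_inf_of_finrank_lt (S := V)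
    (by omega : finrank ℝ E < finrank ℝ V + finrank ℝ (Submodule.span ℝ (u '' ↑(Ici r))))
  have hle := u.orthonormal.inner_map_self_le_of_mem_span hTu
    (fun i hi => hμ (mem_Ici.mp hi)) hxU
  exact le_of_mul_le_mul_right ((hc x hxV).trans hle) (by positivity)

theorem eigenvalue_le_of_forall_inner_le (u : OrthonormalBasis (Fin n) ℝ E)
    (hμ : Antitone μ) (hTu : ∀ i, T (u i) = μ i • u i) {r : Fin n} {c : ℝ}
    {U : Submodule ℝ E} (hU : n - r ≤ finrank ℝ U) (hc : ∀ x ∈ U, ⟪x, T x⟫ ≤ c * ‖x‖ ^ 2) :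
    μ r ≤ c := by
  have hV := u.orthonormal.linearIndependent.finrank_span_image_finset (Iic r)
  rw [Fin.card_Iic] at hV
  have hn := finrank_eq_card_basis u.toBasis
  rw [Fintype.card_fin] at hn
  have := r.2
  obtain ⟨x, hxV, hxU, hx⟩ := Submodule.exists_ne_zero_mem_inf_of_finrank_lt (T := U)
    (by omega : finrank ℝ E < finrank ℝ (Submodule.span ℝ (u '' ↑(Iic r))) + finrank ℝ U)
  have hle := u.orthonormal.le_inner_map_self_of_mem_span hTu
    (fun i hi => hμ (mem_Iic.mp hi)) hxV
  exact le_of_mul_le_mul_right (hle.trans (hc x hxU)) (by positivity)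

end CourantFischer

section NearIsometry
variable {F G : Type*} [NormedAddCommGroup F] [InnerProductSpace ℝ F]
  [NormedAddCommGroup G] [InnerProductSpace ℝ G]

def IsNearIsometry (T : F →ₗ[ℝ] G) (δ : ℝ) : Prop :=
  ∀ y, |‖T y‖ ^ 2 - ‖y‖ ^ 2| ≤ δ * ‖y‖ ^ 2

namespace IsNearIsometry
variable {T : F →ₗ[ℝ] G} {δ : ℝ}

theorem norm_sq_le (hT : IsNearIsometry T δ) (y : F) : ‖T y‖ ^ 2 ≤ (1 + δ) * ‖y‖ ^ 2 := by
  linarith [(abs_le.mp (hT y)).2]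

theorem le_norm_sq (hT : IsNearIsometry T δ) (y : F) : (1 - δ) * ‖y‖ ^ 2 ≤ ‖T y‖ ^ 2 := by
  linarith [(abs_le.mp (hT y)).1]

theorem injective (hT : IsNearIsometry T δ) (hδ : δ < 1) : Function.Injective T := by
  rw [← LinearMap.ker_eq_bot, LinearMap.ker_eq_bot']
  intro y hy
  have h := hT.le_norm_sq y
  rw [hy, norm_zero] at h
  have : ‖y‖ ^ 2 ≤ 0 := by nlinarith [sq_nonneg ‖y‖]
  simpa using this

variable [FiniteDimensional ℝ F] [FiniteDimensional ℝ G]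

theorem norm_adjoint_sq_le (hT : IsNearIsometry T δ) (hδ : 0 ≤ δ) (x : G) :
    ‖T.adjoint x‖ ^ 2 ≤ (1 + δ) * ‖x‖ ^ 2 := by
  set y := T.adjoint x
  have hy : ‖y‖ ^ 2 ≤ ‖T y‖ * ‖x‖ := by
    rw [← real_inner_self_eq_norm_sq, LinearMap.adjoint_inner_right]
    exact real_inner_le_norm _ _
  rcases (norm_nonneg y).eq_or_lt with h0 | hpos
  · rw [← h0, zero_pow two_ne_zero]; positivity
  refine le_of_mul_le_mul_right ?_ (pow_pos hpos 2)
  calc ‖y‖ ^ 2 * ‖y‖ ^ 2 ≤ ‖T y‖ ^ 2 * ‖x‖ ^ 2 := by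
        linarith [mul_self_le_mul_self (sq_nonneg _) hy]
    _ ≤ (1 + δ) * ‖y‖ ^ 2 * ‖x‖ ^ 2 := by gcongr; exact hT.norm_sq_le y
    _ = (1 + δ) * ‖x‖ ^ 2 * ‖y‖ ^ 2 := by ring

theorem le_norm_adjoint_sq_of_mem_range (hT : IsNearIsometry T δ) {x : G}
    (hx : x ∈ LinearMap.range T) : (1 - δ) * ‖x‖ ^ 2 ≤ ‖T.adjoint x‖ ^ 2 := by
  obtain ⟨y, rfl⟩ := hx
  have hTy : ‖T y‖ ^ 2 ≤ ‖y‖ * ‖T.adjoint (T y)‖ := by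
    rw [← real_inner_self_eq_norm_sq, ← LinearMap.adjoint_inner_right]
    exact real_inner_le_norm _ _
  rcases le_or_gt 1 δ with hδ | hδ
  · exact (mul_nonpos_of_nonpos_of_nonneg (by linarith) (sq_nonneg _)).trans (sq_nonneg _)
  rcases (norm_nonneg (T y)).eq_or_lt with h0 | hpos
  · rw [← h0, zero_pow two_ne_zero, mul_zero]; positivity
  refine le_of_mul_le_mul_right ?_ (pow_pos hpos 2)
  calc (1 - δ) * ‖T y‖ ^ 2 * ‖T y‖ ^ 2 ≤ (1 - δ) * (‖y‖ ^ 2 * ‖T.adjoint (T y)‖ ^ 2) := by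
        rw [mul_assoc]
        exact mul_le_mul_of_nonneg_left
          (by linarith [mul_self_le_mul_self (sq_nonneg _) hTy]) (by linarith)
    _ ≤ ‖T y‖ ^ 2 * ‖T.adjoint (T y)‖ ^ 2 := by
        rw [← mul_assoc]; gcongr; exact hT.le_norm_sq y
    _ = ‖T.adjoint (T y)‖ ^ 2 * ‖T y‖ ^ 2 := by ring

end IsNearIsometry

end NearIsometry

namespace Matrix
variable {m n ι : Type*} [Fintype m] [Fintype n] [Fintype ι] [DecidableEq m] [DecidableEq n]
  [DecidableEq ι]

theorem toEuclideanLin_transpose (C : Matrix m n ℝ) :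
    toEuclideanLin Cᵀ = (toEuclideanLin C).adjoint := by
  rw [← conjTranspose_eq_transpose_of_trivial, toEuclideanLin_conjTranspose_eq_adjoint]

theorem inner_toEuclideanLin_transpose_mul_self (C : Matrix m n ℝ)
    (y : EuclideanSpace ℝ n) : ⟪y, toEuclideanLin (Cᵀ * C) y⟫ = ‖toEuclideanLin C y‖ ^ 2 := by
  rw [toLpLin_mul_same, LinearMap.comp_apply, toEuclideanLin_transpose,
    LinearMap.adjoint_inner_right, real_inner_self_eq_norm_sq]

theorem isNearIsometry_toEuclideanLin {C : Matrix m n ℝ} {δ : ℝ}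
    (h : specNorm (Cᵀ * C - 1) ≤ δ) : IsNearIsometry (toEuclideanLin C) δ := by
  intro y
  have hE : ‖toEuclideanLin (Cᵀ * C - 1) y‖ ≤ specNorm (Cᵀ * C - 1) * ‖y‖ :=
    (LinearMap.toContinuousLinearMap (toEuclideanLin (Cᵀ * C - 1))).le_opNorm y
  calc |‖toEuclideanLin C y‖ ^ 2 - ‖y‖ ^ 2| = |⟪y, toEuclideanLin (Cᵀ * C - 1) y⟫| := by
        rw [map_sub, LinearMap.sub_apply, inner_sub_right,
          inner_toEuclideanLin_transpose_mul_self, toLpLin_one, LinearMap.id_apply,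
          real_inner_self_eq_norm_sq]
    _ ≤ ‖y‖ * ‖toEuclideanLin (Cᵀ * C - 1) y‖ := abs_real_inner_le_norm _ _
    _ ≤ ‖y‖ * (δ * ‖y‖) := by gcongr; exact hE.trans (by gcongr)
    _ = δ * ‖y‖ ^ 2 := by ring

theorem norm_sq_toEuclideanLin_diagonal (w : ι → ℝ) (z : EuclideanSpace ℝ ι) :
    ‖toEuclideanLin (diagonal w) z‖ ^ 2 = ∑ i, w i ^ 2 * z i ^ 2 := by
  simp [EuclideanSpace.norm_sq_eq, toLpLin_apply, mulVec_diagonal, mul_pow]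

theorem norm_sq_toEuclideanLin_diagonal_le {w : ι → ℝ} {z : EuclideanSpace ℝ ι} {c : ℝ}
    (hz : ∀ i, z i ≠ 0 → w i ^ 2 ≤ c) : ‖toEuclideanLin (diagonal w) z‖ ^ 2 ≤ c * ‖z‖ ^ 2 := by
  rw [norm_sq_toEuclideanLin_diagonal, EuclideanSpace.norm_sq_eq, Finset.mul_sum]
  refine Finset.sum_le_sum fun i _ => ?_
  by_cases hi : z i = 0
  · simp [hi]
  · simpa using mul_le_mul_of_nonneg_right (hz i hi) (sq_nonneg (z i))

theorem le_norm_sq_toEuclideanLin_diagonal {w : ι → ℝ} {z : EuclideanSpace ℝ ι} {c : ℝ}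
    (hz : ∀ i, z i ≠ 0 → c ≤ w i ^ 2) : c * ‖z‖ ^ 2 ≤ ‖toEuclideanLin (diagonal w) z‖ ^ 2 := by
  rw [norm_sq_toEuclideanLin_diagonal, EuclideanSpace.norm_sq_eq, Finset.mul_sum]
  refine Finset.sum_le_sum fun i _ => ?_
  by_cases hi : z i = 0
  · simp [hi]
  · simpa using mul_le_mul_of_nonneg_right (hz i hi) (sq_nonneg (z i))

theorem IsHermitian.toEuclideanLin_eigenvectorBasis {H : Matrix n n ℝ} (hH : H.IsHermitian)
    (j : n) :
    toEuclideanLin H (hH.eigenvectorBasis j) = hH.eigenvalues j • hH.eigenvectorBasis j := by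
  ext i
  simpa [toLpLin_apply] using congrFun (hH.mulVec_eigenvectorBasis j) i

end Matrix

section Coordinates
variable {ι : Type*}

noncomputable def restrictCoords (s : Finset ι) : EuclideanSpace ℝ ι →ₗ[ℝ] (s → ℝ) :=
  LinearMap.pi fun i => EuclideanSpace.projₗ (i : ι)

theorem restrictCoords_eq_zero_iff {s : Finset ι} {z : EuclideanSpace ℝ ι} :
    restrictCoords s z = 0 ↔ ∀ i ∈ s, z i = 0 := by
  simp [restrictCoords, funext_iff]

theorem finrank_sub_card_le_finrank_ker_restrictCoords_comp {E : Type*} [NormedAddCommGroup E]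
    [InnerProductSpace ℝ E] [FiniteDimensional ℝ E] (f : E →ₗ[ℝ] EuclideanSpace ℝ ι)
    (s : Finset ι) : finrank ℝ E - #s ≤ finrank ℝ (LinearMap.ker (restrictCoords s ∘ₗ f)) := by
  simpa using (restrictCoords s ∘ₗ f).finrank_sub_finrank_le_finrank_ker

end Coordinates

section SingularValueBounds
variable {E G : Type*} [NormedAddCommGroup E] [InnerProductSpace ℝ E] [FiniteDimensional ℝ E]
  [NormedAddCommGroup G] [InnerProductSpace ℝ G]
  {n R : ℕ} {T : E →ₗ[ℝ] E} {μ : Fin n → ℝ} {a : EuclideanSpace ℝ (Fin R) →ₗ[ℝ] G}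
  {b : EuclideanSpace ℝ (Fin R) →ₗ[ℝ] E} {w : Fin R → ℝ} {δ : ℝ}

theorem eigenvalue_le_sq_of_isNearIsometry (u : OrthonormalBasis (Fin n) ℝ E) (hμ : Antitone μ)
    (hTu : ∀ i, T (u i) = μ i • u i)
    (hq : ∀ x, ⟪x, T x⟫ = ‖a (toEuclideanLin (diagonal w) (b.adjoint x))‖ ^ 2)
    (ha : IsNearIsometry a δ) (hb : IsNearIsometry b δ) (hδ : 0 ≤ δ) (hw : ∀ i, 0 ≤ w i)
    (hmono : Antitone w) {r : Fin R} {r' : Fin n} (hr : (r' : ℕ) = r) :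
    μ r' ≤ ((1 + δ) * w r) ^ 2 := by
  set U := LinearMap.ker (restrictCoords (Iio r) ∘ₗ b.adjoint)
  have hU : n - r' ≤ finrank ℝ U := by
    have := finrank_sub_card_le_finrank_ker_restrictCoords_comp b.adjoint (Iio r)
    rwa [Fin.card_Iio, finrank_eq_card_basis u.toBasis, Fintype.card_fin, ← hr] at this
  refine eigenvalue_le_of_forall_inner_le u hμ hTu hU fun x hx => ?_
  set z := b.adjoint x
  have hz : ∀ i, z i ≠ 0 → w i ^ 2 ≤ w r ^ 2 := fun i hi => by
    have hri : r ≤ i := by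
      by_contra! hir
      exact hi (restrictCoords_eq_zero_iff.mp hx i (mem_Iio.mpr hir))
    exact pow_le_pow_left₀ (hw i) (hmono hri) 2
  calc ⟪x, T x⟫ = ‖a (toEuclideanLin (diagonal w) z)‖ ^ 2 := hq x
    _ ≤ (1 + δ) * ‖toEuclideanLin (diagonal w) z‖ ^ 2 := ha.norm_sq_le _
    _ ≤ (1 + δ) * (w r ^ 2 * ‖z‖ ^ 2) := by
        gcongr; exact norm_sq_toEuclideanLin_diagonal_le hz
    _ ≤ (1 + δ) * (w r ^ 2 * ((1 + δ) * ‖x‖ ^ 2)) := by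
        gcongr; exact hb.norm_adjoint_sq_le hδ x
    _ = ((1 + δ) * w r) ^ 2 * ‖x‖ ^ 2 := by ring

theorem sq_le_eigenvalue_of_isNearIsometry (u : OrthonormalBasis (Fin n) ℝ E) (hμ : Antitone μ)
    (hTu : ∀ i, T (u i) = μ i • u i)
    (hq : ∀ x, ⟪x, T x⟫ = ‖a (toEuclideanLin (diagonal w) (b.adjoint x))‖ ^ 2)
    (ha : IsNearIsometry a δ) (hb : IsNearIsometry b δ) (hδ : δ < 1) (hw : ∀ i, 0 ≤ w i)
    (hmono : Antitone w) {r : Fin R} {r' : Fin n} (hr : (r' : ℕ) = r) :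
    ((1 - δ) * w r) ^ 2 ≤ μ r' := by
  have hS := finrank_sub_card_le_finrank_ker_restrictCoords_comp (b.adjoint ∘ₗ b) (Ioi r)
  rw [Fin.card_Ioi, finrank_euclideanSpace_fin,
    (Submodule.equivMapOfInjective b (hb.injective hδ) _).finrank_eq,
    show R - (R - 1 - r) = r' + 1 by omega] at hS
  refine le_eigenvalue_of_forall_le_inner u hμ hTu hS fun x hx => ?_
  obtain ⟨y, hy, rfl⟩ := Submodule.mem_map.mp hx
  set z := b.adjoint (b y)
  have hz : ∀ i, z i ≠ 0 → w r ^ 2 ≤ w i ^ 2 := fun i hi => by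
    have hir : i ≤ r := by
      by_contra! hri
      exact hi (restrictCoords_eq_zero_iff.mp hy i (mem_Ioi.mpr hri))
    exact pow_le_pow_left₀ (hw r) (hmono hir) 2
  calc ((1 - δ) * w r) ^ 2 * ‖b y‖ ^ 2 = (1 - δ) * (w r ^ 2 * ((1 - δ) * ‖b y‖ ^ 2)) := by ring
    _ ≤ (1 - δ) * (w r ^ 2 * ‖z‖ ^ 2) := by
        gcongr
        exact hb.le_norm_adjoint_sq_of_mem_range (LinearMap.mem_range_self b y)
    _ ≤ (1 - δ) * ‖toEuclideanLin (diagonal w) z‖ ^ 2 := by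
        gcongr
        exact le_norm_sq_toEuclideanLin_diagonal hz
    _ ≤ ‖a (toEuclideanLin (diagonal w) z)‖ ^ 2 := ha.le_norm_sq _
    _ = ⟪b y, T (b y)⟫ := (hq _).symm

end SingularValueBounds

theorem stmt0_general (dS dSc R : ℕ) (hRSc : R ≤ dSc)
    (A : Matrix (Fin dS) (Fin R) ℝ) (B : Matrix (Fin dSc) (Fin R) ℝ)
    (w : Fin R → ℝ) (hw : ∀ r, 0 < w r) (hmono : Antitone w)
    (δ : ℝ)
    (hδ : δ = max (specNorm (Aᵀ * A - 1)) (specNorm (Bᵀ * B - 1)))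
    (Mmat : Matrix (Fin dS) (Fin dSc) ℝ) (hM : Mmat = A * Matrix.diagonal w * Bᵀ)
    (hH : (Mmatᵀ * Mmat).IsHermitian)
    (μ : Fin dSc → ℝ) (hμanti : Antitone μ)
    (hμ : ∃ e : Equiv.Perm (Fin dSc), ∀ i, μ i = hH.eigenvalues (e i)) :
    ∀ r : Fin R,
      |Real.sqrt (μ (Fin.castLE hRSc r)) - w r|
        ≤ Real.sqrt 2 * δ * w ⟨0, Nat.lt_of_le_of_lt (Nat.zero_le r.1) r.2⟩ := by
  intro r
  obtain ⟨e, he⟩ := hμ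
  set u := hH.eigenvectorBasis.reindex e.symm
  have hTu : ∀ i, toEuclideanLin (Mmatᵀ * Mmat) (u i) = μ i • u i := fun i => by
    simp only [u, OrthonormalBasis.reindex_apply, Equiv.symm_symm, he]
    exact hH.toEuclideanLin_eigenvectorBasis (e i)
  have hq : ∀ x, ⟪x, toEuclideanLin (Mmatᵀ * Mmat) x⟫
      = ‖toEuclideanLin A (toEuclideanLin (diagonal w) ((toEuclideanLin B).adjoint x))‖ ^ 2 := by
    intro x
    rw [inner_toEuclideanLin_transpose_mul_self, hM, toLpLin_mul_same, toLpLin_mul_same,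
      toEuclideanLin_transpose]
    rfl
  have ha := isNearIsometry_toEuclideanLin (hδ ▸ le_max_left _ _ : specNorm (Aᵀ * A - 1) ≤ δ)
  have hb := isNearIsometry_toEuclideanLin (hδ ▸ le_max_right _ _ : specNorm (Bᵀ * B - 1) ≤ δ)
  have hδ0 : 0 ≤ δ := hδ ▸ le_max_of_le_left (norm_nonneg _)
  have hw0 : ∀ i, 0 ≤ w i := fun i => (hw i).le
  have hupper : √(μ (Fin.castLE hRSc r)) ≤ (1 + δ) * w r :=
    Real.sqrt_le_iff.mpr ⟨mul_nonneg (by linarith) (hw0 r),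
      eigenvalue_le_sq_of_isNearIsometry u hμanti hTu hq ha hb hδ0 hw0 hmono rfl⟩
  have hlower : (1 - δ) * w r ≤ √(μ (Fin.castLE hRSc r)) := by
    rcases lt_or_ge δ 1 with hδ1 | hδ1
    · exact (le_abs_self _).trans (Real.abs_le_sqrt
        (sq_le_eigenvalue_of_isNearIsometry u hμanti hTu hq ha hb hδ1 hw0 hmono rfl))
    · exact (mul_nonpos_of_nonpos_of_nonneg (by linarith) (hw0 r)).trans (Real.sqrt_nonneg _)
  calc |√(μ (Fin.castLE hRSc r)) - w r| ≤ δ * w r := abs_sub_le_iff.mpr ⟨by linarith, by linarith⟩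
    _ ≤ δ * w ⟨0, _⟩ := by gcongr; exact hmono (Nat.zero_le _)
    _ ≤ √2 * δ * w ⟨0, _⟩ := by
        rw [mul_assoc]; exact le_mul_of_one_le_left (mul_nonneg hδ0 (hw0 _)) Real.one_lt_sqrt_two.le

theorem stmt0 (dS dSc R : ℕ) (hRS : R ≤ dS) (hRSc : R ≤ dSc)
    (A : Matrix (Fin dS) (Fin R) ℝ) (B : Matrix (Fin dSc) (Fin R) ℝ)
    (hA : ∀ r, ∑ i, (A i r) ^ 2 = 1) (hB : ∀ r, ∑ i, (B i r) ^ 2 = 1)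
    (w : Fin R → ℝ) (hw : ∀ r, 0 < w r) (hmono : Antitone w)
    (δ : ℝ)
    (hδ : δ = max (specNorm (Aᵀ * A - 1)) (specNorm (Bᵀ * B - 1)))
    (Mmat : Matrix (Fin dS) (Fin dSc) ℝ) (hM : Mmat = A * Matrix.diagonal w * Bᵀ)
    (hH : (Mmatᵀ * Mmat).IsHermitian)
    (μ : Fin dSc → ℝ) (hμanti : Antitone μ)
    (hμ : ∃ e : Equiv.Perm (Fin dSc), ∀ i, μ i = hH.eigenvalues (e i)) :
    ∀ r : Fin R,
      |Real.sqrt (μ (Fin.castLE hRSc r)) - w r|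
        ≤ Real.sqrt 2 * δ * w ⟨0, Nat.lt_of_le_of_lt (Nat.zero_le r.1) r.2⟩ :=
  stmt0_general dS dSc R hRSc A B w hw hmono δ hδ Mmat hM hH μ hμanti hμ
end

section
/- Let A ∈ R^{d_1×r} and B ∈ R^{d_2×r} with ‖A^T A − I_r‖_2 ≤ δ and ‖B^T B − I_r‖_2 ≤ δ, where d_1, d_2 ≥ r. Let U and V be the orthogonal polar factors of A and B respectively. Then for every matrix Q ∈ R^{r×r}, ‖A Q B^T − U Q V^T‖_2 ≤ √2 · δ · ‖Q‖_2. -/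
open Matrix

open scoped Matrix.Norms.L2Operator


lemma sq_range (a δ : ℝ) (hδ : 0 ≤ δ) (h : (a^2-1)^2 ≤ δ^2) : 1 - δ ≤ a^2 ∧ a^2 ≤ 1 + δ := by
  constructor <;> nlinarith [sq_nonneg (a^2 - 1 + δ), sq_nonneg (a^2 - 1 - δ)]

lemma keyB (c a : ℝ) (hc : 2 ≤ c^2) (ha : 0 ≤ a) (hac : a ≤ c) :
    (c+1)*(a-1)^2 + (c-1)*(a+1)^2 ≤ 2*c*(c^2-1) := by
  have h1 : 0 ≤ (c - a) * (c*(c+a) - 2) := by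
    apply mul_nonneg (by linarith)
    nlinarith
  nlinarith [h1]

lemma keyA (δ a m M : ℝ) (hm0 : 0 ≤ m) (hm : m ≤ (a+1)^2) (hM : (a+1)^2 ≤ M)
    (h : (a-1)^2*(a+1)^2 ≤ δ^2) :
    m*M*(a-1)^2 + δ^2*(a+1)^2 ≤ δ^2*(m+M) := by
  have e1 : 0 ≤ ((a+1)^2 - m)*(M - (a+1)^2) := mul_nonneg (by linarith) (by linarith)
  have e2 : 0 ≤ (m + M - (a+1)^2) * (δ^2 - (a-1)^2*(a+1)^2) :=
    mul_nonneg (by linarith) (by linarith)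
  nlinarith [mul_nonneg e1 (sq_nonneg (a-1))]

lemma exists_K (δ : ℝ) (hδ : 0 < δ) :
    ∃ γ K₁ K₂ : ℝ, 0 < γ ∧ 0 ≤ K₁ ∧ 0 ≤ K₂ ∧ K₁ * K₂ ≤ 8 * δ^2 ∧
      (∀ a : ℝ, 0 ≤ a → (a^2-1)^2 ≤ δ^2 → γ*(a-1)^2 + (a+1)^2 ≤ K₁) ∧
      (∀ b : ℝ, 0 ≤ b → (b^2-1)^2 ≤ δ^2 → (b+1)^2/γ + (b-1)^2 ≤ K₂) := by
  rcases le_or_gt 1 δ with hδ1 | hδ1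
  · -- δ ≥ 1
    set c : ℝ := Real.sqrt (1+δ) with hc_def
    have hc2 : c^2 = 1 + δ := Real.sq_sqrt (by linarith)
    have hc2' : 2 ≤ c^2 := by rw [hc2]; linarith
    have hc0 : 0 ≤ c := Real.sqrt_nonneg _
    have hc1 : 1 < c := by nlinarith
    clear_value c
    have hcm : (0:ℝ) < c - 1 := by linarith
    have hcp : (0:ℝ) < c + 1 := by linarith
    refine ⟨(c+1)/(c-1), 2*c*(c+1), 2*c*(c-1), div_pos hcp hcm, by positivity,
      by positivity, ?_, ?_, ?_⟩
    · have hδc : δ = c^2 - 1 := by linarith [hc2]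
      have : 2*c*(c+1) * (2*c*(c-1)) = 4*(1+δ)*δ := by rw [hδc]; ring
      rw [this]; nlinarith
    · intro a ha h
      have hac : a ≤ c := by
        have h2 := (sq_range a δ hδ.le h).2
        nlinarith
      have hk := keyB c a hc2' ha hac
      rw [div_mul_eq_mul_div, div_add' _ _ _ (ne_of_gt hcm), div_le_iff₀ hcm]
      linarith [hk]
    · intro b hb h
      have hbc : b ≤ c := by
        have h2 := (sq_range b δ hδ.le h).2
        nlinarith
      have hk := keyB c b hc2' hb hbc
      rw [div_div_eq_mul_div, div_add' _ _ _ (ne_of_gt hcp), div_le_iff₀ hcp]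
      nlinarith [hk]
  · -- δ < 1
    set cm : ℝ := Real.sqrt (1-δ) with hcm_def
    set cp : ℝ := Real.sqrt (1+δ) with hcp_def
    have hcm2 : cm^2 = 1 - δ := Real.sq_sqrt (by linarith)
    have hcp2 : cp^2 = 1 + δ := Real.sq_sqrt (by linarith)
    have hcm0 : 0 ≤ cm := Real.sqrt_nonneg _
    have hcp0 : 0 ≤ cp := Real.sqrt_nonneg _
    set m : ℝ := (1+cm)^2 with hm_def
    set M : ℝ := (1+cp)^2 with hM_def
    have hm0 : (0:ℝ) < m := by positivity
    have hM0 : (0:ℝ) < M := by positivity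
    clear_value cm cp m M
    have hs2 : Real.sqrt 2 ≤ cm + cp := by
      have : Real.sqrt 2 ≤ Real.sqrt ((cm+cp)^2) := by
        apply Real.sqrt_le_sqrt; nlinarith [mul_nonneg hcm0 hcp0]
      rwa [Real.sqrt_sq (by linarith)] at this
    have hsum : (m + M)^2 ≤ 8 * (m*M) := by
      have h2 : Real.sqrt 2 ^ 2 = 2 := Real.sq_sqrt (by norm_num)
      have hs0 : (0:ℝ) ≤ Real.sqrt 2 := Real.sqrt_nonneg _
      have hσ : cm^2 + cp^2 = 2 := by rw [hcm2, hcp2]; ring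
      have hσ2 : 2 ≤ (cm+cp)^2 := by nlinarith [mul_nonneg hcm0 hcp0]
      have hmM : m + M = 4 + 2*(cm+cp) := by rw [hm_def, hM_def]; linear_combination hσ
      have hprod : m*M = (1 + (cm+cp) + cm*cp)^2 := by rw [hm_def, hM_def]; ring
      have hcc : cm*cp = ((cm+cp)^2 - 2)/2 := by linear_combination -hσ/2
      rw [hmM, hprod, hcc]
      nlinarith [mul_nonneg (sq_nonneg ((cm+cp)+2)) (show (0:ℝ) ≤ 2*(cm+cp)^2 - 4 by linarith)]
    refine ⟨m*M/δ^2, m+M, δ^2*(m+M)/(m*M), by positivity, by positivity, by positivity,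
      ?_, ?_, ?_⟩
    · have e : (m+M) * (δ^2*(m+M)/(m*M)) = δ^2*(m+M)^2/(m*M) := by
        field_simp
      rw [e, div_le_iff₀ (by positivity : (0:ℝ) < m*M)]
      nlinarith [mul_le_mul_of_nonneg_left hsum (sq_nonneg δ)]
    · intro a ha h
      have hr := sq_range a δ hδ.le h
      have hma : cm ≤ a := by
        have : Real.sqrt (1-δ) ≤ Real.sqrt (a^2) := Real.sqrt_le_sqrt (by linarith [hr.1])
        rw [Real.sqrt_sq ha] at this; rw [hcm_def]; exact this
      have hMa : a ≤ cp := by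
        have : Real.sqrt (a^2) ≤ Real.sqrt (1+δ) := Real.sqrt_le_sqrt (by linarith [hr.2])
        rw [Real.sqrt_sq ha] at this; rw [hcp_def]; exact this
      have hm' : m ≤ (a+1)^2 := by
        rw [hm_def]; exact pow_le_pow_left₀ (by linarith) (by linarith) 2
      have hM' : (a+1)^2 ≤ M := by
        rw [hM_def]; exact pow_le_pow_left₀ (by linarith) (by linarith) 2
      have hk := keyA δ a m M hm0.le hm' hM' (by calc (a-1)^2*(a+1)^2 = (a^2-1)^2 := by ring
        _ ≤ δ^2 := h)
      rw [div_mul_eq_mul_div, div_add' _ _ _ (by positivity : (δ^2:ℝ) ≠ 0),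
        div_le_iff₀ (by positivity : (0:ℝ) < δ^2)]
      linarith [hk]
    · intro b hb h
      have hr := sq_range b δ hδ.le h
      have hmb : cm ≤ b := by
        have : Real.sqrt (1-δ) ≤ Real.sqrt (b^2) := Real.sqrt_le_sqrt (by linarith [hr.1])
        rw [Real.sqrt_sq hb] at this; rw [hcm_def]; exact this
      have hMb : b ≤ cp := by
        have : Real.sqrt (b^2) ≤ Real.sqrt (1+δ) := Real.sqrt_le_sqrt (by linarith [hr.2])
        rw [Real.sqrt_sq hb] at this; rw [hcp_def]; exact this
      have hm' : m ≤ (b+1)^2 := by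
        rw [hm_def]; exact pow_le_pow_left₀ (by linarith) (by linarith) 2
      have hM' : (b+1)^2 ≤ M := by
        rw [hM_def]; exact pow_le_pow_left₀ (by linarith) (by linarith) 2
      have hk := keyA δ b m M hm0.le hm' hM' (by calc (b-1)^2*(b+1)^2 = (b^2-1)^2 := by ring
        _ ≤ δ^2 := h)
      rw [div_div_eq_mul_div, div_add' _ _ _ (by positivity : (m*M:ℝ) ≠ 0),
        div_le_iff₀ (by positivity : (0:ℝ) < m*M)]
      rw [div_mul_cancel₀ _ (by positivity : (m*M:ℝ) ≠ 0)]
      linarith [hk]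


variable {r : ℕ}

noncomputable def en (w : Fin r → ℝ) : ℝ := Real.sqrt (∑ i, w i ^ 2)

lemma en_nonneg (w : Fin r → ℝ) : 0 ≤ en w := Real.sqrt_nonneg _

lemma en_sq (w : Fin r → ℝ) : en w ^ 2 = ∑ i, w i ^ 2 :=
  Real.sq_sqrt (Finset.sum_nonneg fun i _ => sq_nonneg _)

lemma en_eq_norm (w : Fin r → ℝ) :
    en w = ‖((WithLp.equiv 2 (Fin r → ℝ)).symm w : EuclideanSpace ℝ (Fin r))‖ := by
  rw [EuclideanSpace.norm_eq]
  simp [en, Real.norm_eq_abs, sq_abs]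

lemma abs_dot_le (w z : Fin r → ℝ) : |w ⬝ᵥ z| ≤ en w * en z := by
  have h := Finset.sum_mul_sq_le_sq_mul_sq Finset.univ w z
  have : |w ⬝ᵥ z| = Real.sqrt ((w ⬝ᵥ z)^2) := (Real.sqrt_sq_eq_abs _).symm
  rw [this]
  calc Real.sqrt ((w ⬝ᵥ z)^2) ≤ Real.sqrt ((∑ i, w i ^2) * ∑ i, z i ^2) := by
        apply Real.sqrt_le_sqrt
        simpa [dotProduct] using h
    _ = en w * en z := by
        rw [Real.sqrt_mul (Finset.sum_nonneg fun i _ => sq_nonneg _)]; rfl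

lemma en_mulVec_le (S : Matrix (Fin r) (Fin r) ℝ) (z : Fin r → ℝ) :
    en (S *ᵥ z) ≤ ‖S‖ * en z := by
  rw [en_eq_norm, en_eq_norm]
  exact Matrix.l2_opNorm_mulVec S ((WithLp.equiv 2 (Fin r → ℝ)).symm z)

lemma abs_dot_mulVec_le (S : Matrix (Fin r) (Fin r) ℝ) (w z : Fin r → ℝ) :
    |w ⬝ᵥ (S *ᵥ z)| ≤ ‖S‖ * en w * en z := by
  calc |w ⬝ᵥ (S *ᵥ z)| ≤ en w * en (S *ᵥ z) := abs_dot_le _ _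
    _ ≤ en w * (‖S‖ * en z) := by
        apply mul_le_mul_of_nonneg_left (en_mulVec_le S z) (en_nonneg w)
    _ = ‖S‖ * en w * en z := by ring

lemma bilin (δ : ℝ) (hδ : 0 < δ) (a b : Fin r → ℝ) (S : Matrix (Fin r) (Fin r) ℝ)
    (ha0 : ∀ i, 0 ≤ a i) (ha : ∀ i, (a i ^2 - 1)^2 ≤ δ^2)
    (hb0 : ∀ j, 0 ≤ b j) (hb : ∀ j, (b j ^2 - 1)^2 ≤ δ^2)
    (u v : Fin r → ℝ) :
    |u ⬝ᵥ ((diagonal a * S * diagonal b - S) *ᵥ v)|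
      ≤ Real.sqrt 2 * δ * ‖S‖ * (en u * en v) := by
  obtain ⟨γ, K₁, K₂, hγ, hK₁0, hK₂0, hK, hA, hB⟩ := exists_K δ hδ
  set x : Fin r → ℝ := fun i => a i * u i with hx
  set y : Fin r → ℝ := fun j => b j * v j with hy
  -- step 1: rewrite the bilinear form
  have step1 : u ⬝ᵥ ((diagonal a * S * diagonal b - S) *ᵥ v)
      = x ⬝ᵥ (S *ᵥ y) - u ⬝ᵥ (S *ᵥ v) := by
    rw [Matrix.sub_mulVec, dotProduct_sub]
    congr 1
    rw [← Matrix.mulVec_mulVec, ← Matrix.mulVec_mulVec]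
    have h1 : (diagonal b) *ᵥ v = y := by
      ext j; rw [Matrix.mulVec_diagonal]
    rw [h1]
    simp only [dotProduct, Matrix.mulVec_diagonal]
    exact Finset.sum_congr rfl fun i _ => by ring
  have step2 : x ⬝ᵥ (S *ᵥ y) - u ⬝ᵥ (S *ᵥ v)
      = (1/2) * ((x-u) ⬝ᵥ (S *ᵥ (y+v))) + (1/2) * ((x+u) ⬝ᵥ (S *ᵥ (y-v))) := by
    simp only [Matrix.mulVec_add, Matrix.mulVec_sub, dotProduct_add,
      dotProduct_sub, add_dotProduct, sub_dotProduct]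
    ring
  set p := en (x - u) with hp
  set P := en (x + u) with hP
  set q := en (y - v) with hq
  set Q := en (y + v) with hQ
  have hp0 : 0 ≤ p := hp ▸ en_nonneg (x-u)
  have hP0 : 0 ≤ P := hP ▸ en_nonneg (x+u)
  have hq0 : 0 ≤ q := hq ▸ en_nonneg (y-v)
  have hQ0 : 0 ≤ Q := hQ ▸ en_nonneg (y+v)
  have habs : |u ⬝ᵥ ((diagonal a * S * diagonal b - S) *ᵥ v)|
      ≤ (1/2) * ‖S‖ * (p * Q + P * q) := by
    rw [step1, step2]
    calc |(1/2) * ((x-u) ⬝ᵥ (S *ᵥ (y+v))) + (1/2) * ((x+u) ⬝ᵥ (S *ᵥ (y-v)))|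
        ≤ |(1/2) * ((x-u) ⬝ᵥ (S *ᵥ (y+v)))| + |(1/2) * ((x+u) ⬝ᵥ (S *ᵥ (y-v)))| :=
          abs_add_le _ _
      _ = (1/2) * |(x-u) ⬝ᵥ (S *ᵥ (y+v))| + (1/2) * |(x+u) ⬝ᵥ (S *ᵥ (y-v))| := by
          rw [abs_mul, abs_mul, abs_of_pos (by norm_num : (0:ℝ) < 1/2)]
      _ ≤ (1/2) * (‖S‖ * p * Q) + (1/2) * (‖S‖ * P * q) := by
          have h1 : |(x-u) ⬝ᵥ (S *ᵥ (y+v))| ≤ ‖S‖ * p * Q := abs_dot_mulVec_le S (x-u) (y+v)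
          have h2 : |(x+u) ⬝ᵥ (S *ᵥ (y-v))| ≤ ‖S‖ * P * q := abs_dot_mulVec_le S (x+u) (y-v)
          exact add_le_add (mul_le_mul_of_nonneg_left h1 (by norm_num))
            (mul_le_mul_of_nonneg_left h2 (by norm_num))
      _ = (1/2) * ‖S‖ * (p * Q + P * q) := by ring
  -- quadratic sums
  have hsum1 : γ * p^2 + P^2 ≤ K₁ * en u ^2 := by
    rw [hp, hP, en_sq, en_sq, en_sq, Finset.mul_sum, ← Finset.sum_add_distrib, Finset.mul_sum]
    apply Finset.sum_le_sum
    intro i _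
    have hxi : (x - u) i = (a i - 1) * u i := by simp [hx]; ring
    have hxi' : (x + u) i = (a i + 1) * u i := by simp [hx]; ring
    rw [hxi, hxi', mul_pow, mul_pow]
    calc γ * ((a i - 1)^2 * u i ^2) + (a i + 1)^2 * u i ^2
        = (γ * (a i - 1)^2 + (a i + 1)^2) * u i ^2 := by ring
      _ ≤ K₁ * u i ^2 := by
          apply mul_le_mul_of_nonneg_right (hA (a i) (ha0 i) (ha i)) (sq_nonneg _)
  have hsum2 : Q^2/γ + q^2 ≤ K₂ * en v ^2 := by
    rw [hq, hQ, en_sq, en_sq, en_sq, Finset.sum_div, ← Finset.sum_add_distrib, Finset.mul_sum]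
    apply Finset.sum_le_sum
    intro j _
    have hyj : (y - v) j = (b j - 1) * v j := by simp [hy]; ring
    have hyj' : (y + v) j = (b j + 1) * v j := by simp [hy]; ring
    rw [hyj, hyj', mul_pow, mul_pow]
    calc (b j + 1)^2 * v j ^2 / γ + (b j - 1)^2 * v j ^2
        = ((b j + 1)^2/γ + (b j - 1)^2) * v j ^2 := by ring
      _ ≤ K₂ * v j ^2 := by
          apply mul_le_mul_of_nonneg_right (hB (b j) (hb0 j) (hb j)) (sq_nonneg _)
  -- Cauchy-Schwarz with weight γ
  have hCS : (p*Q + P*q)^2 ≤ (γ*p^2 + P^2) * (Q^2/γ + q^2) := by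
    have e : (γ*p^2+P^2)*(Q^2/γ+q^2) - (p*Q+P*q)^2 = (γ*(p*q) - P*Q)^2/γ := by
      field_simp
      ring
    nlinarith [div_nonneg (sq_nonneg (γ*(p*q) - P*Q)) hγ.le]
  have hfin : (p*Q + P*q)^2 ≤ 8 * δ^2 * (en u ^2 * en v ^2) := by
    calc (p*Q + P*q)^2 ≤ (γ*p^2 + P^2) * (Q^2/γ + q^2) := hCS
      _ ≤ (K₁ * en u ^2) * (K₂ * en v ^2) := by
          apply mul_le_mul hsum1 hsum2
            (add_nonneg (div_nonneg (sq_nonneg _) hγ.le) (sq_nonneg _))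
            (mul_nonneg hK₁0 (sq_nonneg _))
      _ = (K₁ * K₂) * (en u ^2 * en v ^2) := by ring
      _ ≤ 8 * δ^2 * (en u ^2 * en v ^2) := by
          apply mul_le_mul_of_nonneg_right hK (by positivity)
  have h2 : Real.sqrt 2 ^ 2 = 2 := Real.sq_sqrt (by norm_num)
  have hfin2 : p*Q + P*q ≤ 2 * Real.sqrt 2 * δ * (en u * en v) := by
    have hr : 8 * δ^2 * (en u ^2 * en v ^2) = (2 * Real.sqrt 2 * δ * (en u * en v))^2 := by
      have : (2 * Real.sqrt 2 * δ * (en u * en v))^2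
          = 2^2 * (Real.sqrt 2^2) * δ^2 * (en u ^2 * en v ^2) := by ring
      rw [this, h2]; ring
    have hnn : 0 ≤ 2 * Real.sqrt 2 * δ * (en u * en v) :=
      mul_nonneg (mul_nonneg (mul_nonneg (by norm_num) (Real.sqrt_nonneg 2)) hδ.le)
        (mul_nonneg (en_nonneg u) (en_nonneg v))
    refine le_of_pow_le_pow_left₀ two_ne_zero hnn ?_
    rw [← hr]
    exact hfin
  calc |u ⬝ᵥ ((diagonal a * S * diagonal b - S) *ᵥ v)|
      ≤ (1/2) * ‖S‖ * (p * Q + P * q) := habs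
    _ ≤ (1/2) * ‖S‖ * (2 * Real.sqrt 2 * δ * (en u * en v)) := by
        apply mul_le_mul_of_nonneg_left hfin2 (by positivity)
    _ = Real.sqrt 2 * δ * ‖S‖ * (en u * en v) := by ring

lemma core_norm (δ : ℝ) (hδ : 0 ≤ δ) (a b : Fin r → ℝ) (S : Matrix (Fin r) (Fin r) ℝ)
    (ha0 : ∀ i, 0 ≤ a i) (ha : ∀ i, (a i ^2 - 1)^2 ≤ δ^2)
    (hb0 : ∀ j, 0 ≤ b j) (hb : ∀ j, (b j ^2 - 1)^2 ≤ δ^2) :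
    ‖diagonal a * S * diagonal b - S‖ ≤ Real.sqrt 2 * δ * ‖S‖ := by
  rcases hδ.eq_or_lt with h0 | hpos
  · -- δ = 0
    have haa : a = fun _ => (1:ℝ) := by
      funext i
      have h1 : a i ^2 = 1 := by nlinarith [ha i, sq_nonneg (a i ^2 - 1)]
      nlinarith [ha0 i, sq_nonneg (a i - 1)]
    have hbb : b = fun _ => (1:ℝ) := by
      funext j
      have h1 : b j ^2 = 1 := by nlinarith [hb j, sq_nonneg (b j ^2 - 1)]
      nlinarith [hb0 j, sq_nonneg (b j - 1)]
    rw [haa, hbb, Matrix.diagonal_one, Matrix.one_mul, Matrix.mul_one, sub_self, ← h0]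
    simp
  · have hc : 0 ≤ Real.sqrt 2 * δ * ‖S‖ :=
      mul_nonneg (mul_nonneg (Real.sqrt_nonneg 2) hδ) (norm_nonneg S)
    rw [Matrix.l2_opNorm_def]
    refine ContinuousLinearMap.opNorm_le_bound _ hc ?_
    intro w
    set N := diagonal a * S * diagonal b - S with hN
    have happ : ((Matrix.toEuclideanLin.trans LinearMap.toContinuousLinearMap) N) w
        = (WithLp.equiv 2 (Fin r → ℝ)).symm (N *ᵥ (WithLp.equiv 2 (Fin r → ℝ) w)) := rfl
    rw [happ, ← en_eq_norm]
    have hw : ‖w‖ = en (WithLp.equiv 2 (Fin r → ℝ) w) := by rw [en_eq_norm]; simp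
    rw [hw]
    set v : Fin r → ℝ := WithLp.equiv 2 (Fin r → ℝ) w with hv
    set w' : Fin r → ℝ := N *ᵥ v with hw'
    have hb2 := bilin δ hpos a b S ha0 ha hb0 hb w' v
    rw [← hN] at hb2
    have hdot : w' ⬝ᵥ (N *ᵥ v) = en w' ^2 := by
      rw [en_sq, ← hw']
      simp [dotProduct, sq]
    have hsq : en w' ^2 ≤ Real.sqrt 2 * δ * ‖S‖ * (en w' * en v) := by
      calc en w' ^2 = |w' ⬝ᵥ (N *ᵥ v)| := by rw [hdot]; exact (abs_of_nonneg (by positivity)).symm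
        _ ≤ _ := hb2
    rcases (en_nonneg w').eq_or_lt with hz | hzpos
    · rw [← hz]
      exact mul_nonneg hc (en_nonneg v)
    · have h3 : en w' * en w' ≤ (Real.sqrt 2 * δ * ‖S‖ * en v) * en w' := by nlinarith [hsq]
      exact le_of_mul_le_mul_right h3 hzpos

lemma norm_one_le_one : ‖(1 : Matrix (Fin r) (Fin r) ℝ)‖ ≤ 1 := by
  rw [Matrix.l2_opNorm_def]
  refine ContinuousLinearMap.opNorm_le_bound _ zero_le_one ?_
  intro w
  have happ : ((Matrix.toEuclideanLin.trans LinearMap.toContinuousLinearMap)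
      (1 : Matrix (Fin r) (Fin r) ℝ)) w
      = (WithLp.equiv 2 (Fin r → ℝ)).symm ((1 : Matrix (Fin r) (Fin r) ℝ) *ᵥ
          (WithLp.equiv 2 (Fin r → ℝ) w)) := rfl
  rw [happ, Matrix.one_mulVec]
  simp

lemma semi_orth_norm {k : ℕ} (U : Matrix (Fin k) (Fin r) ℝ) (hU : Uᵀ * U = 1) : ‖U‖ ≤ 1 := by
  have h := Matrix.l2_opNorm_conjTranspose_mul_self U
  have hT : Uᴴ = Uᵀ := by
    ext i j; simp [Matrix.conjTranspose]
  rw [hT, hU] at h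
  nlinarith [norm_nonneg U, norm_one_le_one (r := r)]

lemma diag_entry_le (c : Fin r → ℝ) (i : Fin r) : |c i| ≤ ‖diagonal c‖ := by
  have h := en_mulVec_le (diagonal c) (Pi.single i 1)
  rw [Matrix.diagonal_mulVec_single] at h
  have h1 : en (Pi.single i (c i * 1) : Fin r → ℝ) = |c i| := by
    unfold en
    rw [show (∑ j, (Pi.single i (c i * 1) : Fin r → ℝ) j ^ 2) = (c i)^2 by
      rw [Finset.sum_eq_single i]
      · simp
      · intro j _ hji; simp [Pi.single_apply, hji]
      · simp]
    exact Real.sqrt_sq_eq_abs _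
  have h2 : en (Pi.single i 1 : Fin r → ℝ) = 1 := by
    unfold en
    rw [show (∑ j, (Pi.single i 1 : Fin r → ℝ) j ^ 2) = 1 by
      rw [Finset.sum_eq_single i]
      · simp
      · intro j _ hji; simp [Pi.single_apply, hji]
      · simp]
    exact Real.sqrt_one
  rw [h1, h2, mul_one] at h
  exact h

lemma diag_sq_bound {k : ℕ} (δ : ℝ) (A U1 : Matrix (Fin k) (Fin r) ℝ)
    (U2 : Matrix (Fin r) (Fin r) ℝ) (DA : Fin r → ℝ)
    (hU1 : U1ᵀ * U1 = 1) (hU2l : U2ᵀ * U2 = 1) (hU2r : U2 * U2ᵀ = 1)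
    (hsvd : A = U1 * diagonal DA * U2ᵀ) (hδ : ‖Aᵀ * A - 1‖ ≤ δ) (i : Fin r) :
    (DA i ^ 2 - 1)^2 ≤ δ^2 := by
  have hδ0 : 0 ≤ δ := le_trans (norm_nonneg _) hδ
  have cancel1 : ∀ X : Matrix (Fin r) (Fin r) ℝ, U1ᵀ * (U1 * X) = X := fun X => by
    rw [← Matrix.mul_assoc, hU1, Matrix.one_mul]
  have cancel2 : ∀ X : Matrix (Fin r) (Fin r) ℝ, U2ᵀ * (U2 * X) = X := fun X => by
    rw [← Matrix.mul_assoc, hU2l, Matrix.one_mul]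
  have hAA : Aᵀ * A = U2 * (diagonal DA * diagonal DA) * U2ᵀ := by
    rw [hsvd, Matrix.transpose_mul, Matrix.transpose_mul, Matrix.transpose_transpose,
      Matrix.diagonal_transpose]
    simp only [Matrix.mul_assoc]
    rw [cancel1]
  have e : U2ᵀ * (Aᵀ * A - 1) * U2 = diagonal (fun j => DA j ^2 - 1) := by
    have t1 : U2ᵀ * (U2 * (diagonal DA * diagonal DA) * U2ᵀ) * U2
        = diagonal (fun j => DA j ^2) := by
      simp only [Matrix.mul_assoc]
      rw [cancel2]
      rw [show diagonal DA * (diagonal DA * (U2ᵀ * U2)) = diagonal DA * diagonal DA by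
        rw [hU2l, Matrix.mul_one]]
      rw [Matrix.diagonal_mul_diagonal]
      congr 1; funext j; ring
    rw [hAA, Matrix.mul_sub, Matrix.sub_mul, Matrix.mul_one, t1, hU2l,
      ← Matrix.diagonal_one, Matrix.diagonal_sub]
  have hU2n : ‖U2‖ ≤ 1 := semi_orth_norm U2 hU2l
  have hU2Tn : ‖U2ᵀ‖ ≤ 1 := semi_orth_norm U2ᵀ (by rw [Matrix.transpose_transpose, hU2r])
  have hdn : ‖diagonal (fun j => DA j ^2 - 1)‖ ≤ δ := by
    rw [← e]
    calc ‖U2ᵀ * (Aᵀ * A - 1) * U2‖ ≤ ‖U2ᵀ * (Aᵀ * A - 1)‖ * ‖U2‖ :=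
          Matrix.l2_opNorm_mul _ _
      _ ≤ (‖U2ᵀ‖ * ‖Aᵀ * A - 1‖) * ‖U2‖ :=
          mul_le_mul_of_nonneg_right (Matrix.l2_opNorm_mul _ _) (norm_nonneg _)
      _ ≤ (1 * δ) * 1 := by
          apply mul_le_mul (mul_le_mul hU2Tn hδ (norm_nonneg _) zero_le_one) hU2n
            (norm_nonneg _) (by linarith)
      _ = δ := by ring
  have habs : |DA i ^2 - 1| ≤ δ :=
    le_trans (by simpa using diag_entry_le (fun j => DA j ^2 - 1) i) hdn
  have := abs_le.mp habs
  nlinarith [this.1, this.2]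


lemma specNorm_eq {m n : Type*} [Fintype m] [Fintype n] [DecidableEq n]
    (A : Matrix m n ℝ) : specNorm A = ‖A‖ := rfl

lemma transpose_norm_le_one {k : ℕ} (V : Matrix (Fin k) (Fin r) ℝ) (hV : Vᵀ * V = 1) :
    ‖Vᵀ‖ ≤ 1 := by
  have h := Matrix.l2_opNorm_conjTranspose V
  have hT : Vᴴ = Vᵀ := by ext i j; simp [Matrix.conjTranspose]
  rw [hT] at h
  rw [h]
  exact semi_orth_norm V hV

theorem stmt2 (d₁ d₂ r : ℕ) (hr₁ : r ≤ d₁) (hr₂ : r ≤ d₂) (δ : ℝ)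
    (A : Matrix (Fin d₁) (Fin r) ℝ) (B : Matrix (Fin d₂) (Fin r) ℝ)
    (hδA : specNorm (Aᵀ * A - 1) ≤ δ) (hδB : specNorm (Bᵀ * B - 1) ≤ δ)
    (U1 : Matrix (Fin d₁) (Fin r) ℝ) (U2 : Matrix (Fin r) (Fin r) ℝ)
    (DA : Fin r → ℝ) (hDA : ∀ i, 0 ≤ DA i)
    (hU1 : U1ᵀ * U1 = 1) (hU2l : U2ᵀ * U2 = 1) (hU2r : U2 * U2ᵀ = 1)
    (hsvdA : A = U1 * Matrix.diagonal DA * U2ᵀ)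
    (V1 : Matrix (Fin d₂) (Fin r) ℝ) (V2 : Matrix (Fin r) (Fin r) ℝ)
    (DB : Fin r → ℝ) (hDB : ∀ i, 0 ≤ DB i)
    (hV1 : V1ᵀ * V1 = 1) (hV2l : V2ᵀ * V2 = 1) (hV2r : V2 * V2ᵀ = 1)
    (hsvdB : B = V1 * Matrix.diagonal DB * V2ᵀ) :
    ∀ Q : Matrix (Fin r) (Fin r) ℝ,
      specNorm (A * Q * Bᵀ - (U1 * U2ᵀ) * Q * (V1 * V2ᵀ)ᵀ)
        ≤ Real.sqrt 2 * δ * specNorm Q := by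
  intro Q
  rw [specNorm_eq, specNorm_eq]
  rw [specNorm_eq] at hδA hδB
  have hδ0 : 0 ≤ δ := le_trans (norm_nonneg _) hδA
  have ha : ∀ i, (DA i ^2 - 1)^2 ≤ δ^2 :=
    diag_sq_bound δ A U1 U2 DA hU1 hU2l hU2r hsvdA hδA
  have hb : ∀ j, (DB j ^2 - 1)^2 ≤ δ^2 :=
    diag_sq_bound δ B V1 V2 DB hV1 hV2l hV2r hsvdB hδB
  have hid : A * Q * Bᵀ - (U1 * U2ᵀ) * Q * (V1 * V2ᵀ)ᵀ
      = U1 * (diagonal DA * (U2ᵀ * Q * V2) * diagonal DB - (U2ᵀ * Q * V2)) * V1ᵀ := by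
    rw [hsvdA, hsvdB]
    simp only [Matrix.transpose_mul, Matrix.transpose_transpose, Matrix.diagonal_transpose,
      Matrix.mul_sub, Matrix.sub_mul, Matrix.mul_assoc]
  rw [hid]
  have hcore : ‖diagonal DA * (U2ᵀ * Q * V2) * diagonal DB - (U2ᵀ * Q * V2)‖
      ≤ Real.sqrt 2 * δ * ‖U2ᵀ * Q * V2‖ :=
    core_norm δ hδ0 DA DB (U2ᵀ * Q * V2) hDA ha hDB hb
  have hU1n : ‖U1‖ ≤ 1 := semi_orth_norm U1 hU1
  have hV1Tn : ‖V1ᵀ‖ ≤ 1 := transpose_norm_le_one V1 hV1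
  have hU2Tn : ‖U2ᵀ‖ ≤ 1 := semi_orth_norm U2ᵀ (by rw [Matrix.transpose_transpose, hU2r])
  have hV2n : ‖V2‖ ≤ 1 := semi_orth_norm V2 hV2l
  have hQ'n : ‖U2ᵀ * Q * V2‖ ≤ ‖Q‖ := by
    calc ‖U2ᵀ * Q * V2‖ ≤ ‖U2ᵀ * Q‖ * ‖V2‖ := Matrix.l2_opNorm_mul _ _
      _ ≤ (‖U2ᵀ‖ * ‖Q‖) * ‖V2‖ :=
          mul_le_mul_of_nonneg_right (Matrix.l2_opNorm_mul _ _) (norm_nonneg _)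
      _ ≤ (1 * ‖Q‖) * 1 :=
          mul_le_mul (mul_le_mul hU2Tn le_rfl (norm_nonneg _) zero_le_one) hV2n
            (norm_nonneg _) (by positivity)
      _ = ‖Q‖ := by ring
  set X := diagonal DA * (U2ᵀ * Q * V2) * diagonal DB - (U2ᵀ * Q * V2) with hX
  have hXn : ‖X‖ ≤ Real.sqrt 2 * δ * ‖Q‖ := by
    calc ‖X‖ ≤ Real.sqrt 2 * δ * ‖U2ᵀ * Q * V2‖ := hcore
      _ ≤ Real.sqrt 2 * δ * ‖Q‖ := by
          apply mul_le_mul_of_nonneg_left hQ'n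
            (mul_nonneg (Real.sqrt_nonneg 2) hδ0)
  calc ‖U1 * X * V1ᵀ‖ ≤ ‖U1 * X‖ * ‖V1ᵀ‖ := Matrix.l2_opNorm_mul _ _
    _ ≤ (‖U1‖ * ‖X‖) * ‖V1ᵀ‖ :=
        mul_le_mul_of_nonneg_right (Matrix.l2_opNorm_mul _ _) (norm_nonneg _)
    _ ≤ (1 * (Real.sqrt 2 * δ * ‖Q‖)) * 1 :=
        mul_le_mul (mul_le_mul hU1n hXn (norm_nonneg _) zero_le_one) hV1Tn
          (norm_nonneg _) (by positivity)
    _ = Real.sqrt 2 * δ * ‖Q‖ := by ring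
end

section
/- Let M ∈ R^{d_1×d_2} with ‖M‖_F = 1, and let a ∈ R^{d_1}, b ∈ R^{d_2} be unit vectors. Let â be a top left singular vector of M. Then min(‖â â^T − a a^T‖_2^2, 1/2) ≤ ‖vec(M) vec(M)^T − vec(a b^T) vec(a b^T)^T‖_2^2. -/
/-!
Write `t = aᵀ M b` and `c = âᵀ a`. For unit vectors `x, y` the matrix `x xᵀ - y yᵀ` has squared
spectral norm exactly `1 - (xᵀ y)²`, so both sides are explicit: the left side is
`min (1 - c²) (1/2)` and the right side is `1 - t²` (note `vec(M)ᵀ vec(a bᵀ) = t`). If `t² ≤ 1/2`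
we are done, so suppose `t² > 1/2`. Let `μ = ‖M‖₂²` be the top eigenvalue of `M Mᵀ`. Then
`t² ≤ ‖Mᵀ a‖² ≤ μ`, and splitting `a = c â + r` with `r ⟂ â` gives
`‖Mᵀ a‖² ≤ μ c² + (1 - μ)(1 - c²)`, since the deflated matrix `M - â âᵀ M` has squared Frobenius
norm `1 - μ`. With `μ > 1/2` these two bounds force `t² ≤ c²`.
-/

open Matrix

open scoped MatrixOrder

section DotProduct
variable {m n : Type*} [Fintype m] [Fintype n]

lemma sq_dotProduct_le (u v : n → ℝ) : (u ⬝ᵥ v) ^ 2 ≤ (u ⬝ᵥ u) * (v ⬝ᵥ v) := by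
  simpa only [dotProduct, sq] using Finset.sum_mul_sq_le_sq_mul_sq Finset.univ u v

lemma norm_toLp_sq (v : n → ℝ) : ‖WithLp.toLp 2 v‖ ^ 2 = v ⬝ᵥ v := by
  rw [← real_inner_self_eq_norm_sq, EuclideanSpace.inner_toLp_toLp, star_trivial]

lemma mulVec_dotProduct_self_le_sum_sq (N : Matrix m n ℝ) (r : n → ℝ) :
    N *ᵥ r ⬝ᵥ N *ᵥ r ≤ (∑ i, ∑ j, N i j ^ 2) * (r ⬝ᵥ r) := by
  rw [Finset.sum_mul]
  refine Finset.sum_le_sum fun i _ => ?_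
  simpa [mulVec, dotProduct, sq] using sq_dotProduct_le (N i) r

lemma transpose_mulVec_dotProduct_self (M : Matrix m n ℝ) (x : m → ℝ) :
    Mᵀ *ᵥ x ⬝ᵥ Mᵀ *ᵥ x = x ⬝ᵥ (M * Mᵀ) *ᵥ x := by
  rw [← mulVec_mulVec, dotProduct_mulVec, vecMul_transpose, dotProduct_comm]

end DotProduct

section SpecNorm
variable {m n : Type*} [Fintype m] [Fintype n] [DecidableEq n]

lemma specNorm_sq_le_of_forall {A : Matrix m n ℝ} {C : ℝ} (hC : 0 ≤ C)
    (h : ∀ w, A *ᵥ w ⬝ᵥ A *ᵥ w ≤ C * (w ⬝ᵥ w)) : specNorm A ^ 2 ≤ C := by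
  have hle : specNorm A ≤ Real.sqrt C := by
    refine ContinuousLinearMap.opNorm_le_bound _ (Real.sqrt_nonneg C) fun x =>
      le_of_sq_le_sq ?_ (by positivity)
    obtain ⟨w, rfl⟩ : ∃ w, x = WithLp.toLp 2 w := ⟨x.ofLp, rfl⟩
    simpa [mul_pow, norm_toLp_sq, Real.sq_sqrt hC] using h w
  calc specNorm A ^ 2 ≤ Real.sqrt C ^ 2 := pow_le_pow_left₀ (norm_nonneg _) hle 2
    _ = C := Real.sq_sqrt hC

lemma mulVec_dotProduct_self_le (A : Matrix m n ℝ) (w : n → ℝ) :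
    A *ᵥ w ⬝ᵥ A *ᵥ w ≤ specNorm A ^ 2 * (w ⬝ᵥ w) := by
  have := pow_le_pow_left₀ (norm_nonneg _)
    ((LinearMap.toContinuousLinearMap (toEuclideanLin A)).le_opNorm (WithLp.toLp 2 w)) 2
  simpa [mul_pow, norm_toLp_sq, specNorm] using this

end SpecNorm

section Projector
variable {n : Type*} [Fintype n] {x y : n → ℝ}

lemma vecMulVec_sub_mulVec (x y w : n → ℝ) :
    (vecMulVec x x - vecMulVec y y) *ᵥ w = (x ⬝ᵥ w) • x - (y ⬝ᵥ w) • y := by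
  simp [sub_mulVec, vecMulVec_mulVec]

/-- The Gram determinant of `x, y, w` is nonnegative. -/
lemma sq_sub_le_of_dotProduct_self_eq_one (hx : x ⬝ᵥ x = 1) (hy : y ⬝ᵥ y = 1) (w : n → ℝ) :
    (x ⬝ᵥ w) ^ 2 - 2 * (x ⬝ᵥ y) * (x ⬝ᵥ w) * (y ⬝ᵥ w) + (y ⬝ᵥ w) ^ 2
      ≤ (1 - (x ⬝ᵥ y) ^ 2) * (w ⬝ᵥ w) := by
  have := (posSemidef_gram ℝ ![WithLp.toLp 2 x, WithLp.toLp 2 y, WithLp.toLp 2 w]).det_nonneg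
  simp only [det_fin_three, gram_apply, cons_val_zero, cons_val_one, cons_val_two, tail_cons,
    head_cons, EuclideanSpace.inner_toLp_toLp, star_trivial, hx, hy, dotProduct_comm w,
    dotProduct_comm y x] at this
  linear_combination this

lemma specNorm_vecMulVec_sub_sq [DecidableEq n] (hx : x ⬝ᵥ x = 1) (hy : y ⬝ᵥ y = 1) :
    specNorm (vecMulVec x x - vecMulVec y y) ^ 2 = 1 - (x ⬝ᵥ y) ^ 2 := by
  set A := vecMulVec x x - vecMulVec y y
  have hA : ∀ w, A *ᵥ w ⬝ᵥ A *ᵥ w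
      = (x ⬝ᵥ w) ^ 2 - 2 * (x ⬝ᵥ y) * (x ⬝ᵥ w) * (y ⬝ᵥ w) + (y ⬝ᵥ w) ^ 2 := fun w => by
    simp only [A, vecMulVec_sub_mulVec, dotProduct_sub, sub_dotProduct, dotProduct_smul,
      smul_dotProduct, smul_eq_mul, hx, hy, dotProduct_comm y x]
    ring
  have hAx : A *ᵥ x ⬝ᵥ A *ᵥ x = 1 - (x ⬝ᵥ y) ^ 2 := by
    rw [hA, hx, dotProduct_comm y x]; ring
  have hc : 0 ≤ 1 - (x ⬝ᵥ y) ^ 2 := by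
    nlinarith [sq_dotProduct_le x y]
  refine le_antisymm (specNorm_sq_le_of_forall hc fun w => ?_) ?_
  · rw [hA]
    exact sq_sub_le_of_dotProduct_self_eq_one hx hy w
  · simpa [hAx, hx] using mulVec_dotProduct_self_le A x

end Projector

lemma Matrix.IsHermitian.dotProduct_mulVec_le {n : Type*} [Fintype n] [DecidableEq n]
    {B : Matrix n n ℝ} (hB : B.IsHermitian) {μ : ℝ}
    (hmax : ∀ (ν : ℝ) (x : n → ℝ), x ≠ 0 → B *ᵥ x = ν • x → ν ≤ μ) (x : n → ℝ) :
    x ⬝ᵥ B *ᵥ x ≤ μ * (x ⬝ᵥ x) := by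
  have hle : B ≤ algebraMap ℝ _ μ := by
    refine le_algebraMap_of_spectrum_le (fun ν hν => ?_) hB.isSelfAdjoint
    rw [hB.spectrum_real_eq_range_eigenvalues] at hν
    obtain ⟨i, rfl⟩ := hν
    refine hmax _ _ ?_ (hB.mulVec_eigenvectorBasis i)
    simpa using hB.eigenvectorBasis.orthonormal.ne_zero i
  simpa [sub_mulVec, Algebra.algebraMap_eq_smul_one, smul_mulVec, dotProduct_sub] using
    (le_iff.mp hle).dotProduct_mulVec_nonneg x

section TopEigenvector
variable {m n : Type*} [Fintype m] [Fintype n] (M : Matrix m n ℝ) {v : m → ℝ} {μ : ℝ}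

lemma transpose_mulVec_dotProduct_self_of_mulVec_eq (hv : v ⬝ᵥ v = 1)
    (heig : (M * Mᵀ) *ᵥ v = μ • v) : Mᵀ *ᵥ v ⬝ᵥ Mᵀ *ᵥ v = μ := by
  rw [transpose_mulVec_dotProduct_self, heig, dotProduct_smul, hv, smul_eq_mul, mul_one]

lemma sum_sq_sub_vecMulVec_transpose_mulVec (hv : v ⬝ᵥ v = 1) :
    ∑ i, ∑ j, (M - vecMulVec v (Mᵀ *ᵥ v)) i j ^ 2
      = ∑ i, ∑ j, M i j ^ 2 - Mᵀ *ᵥ v ⬝ᵥ Mᵀ *ᵥ v := by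
  set u := Mᵀ *ᵥ v
  have hcross : ∀ j, ∑ i, 2 * M i j * (v i * u j) = 2 * (u j * u j) := fun j => by
    have hu : u j = ∑ i, M i j * v i := by simp [u, mulVec, dotProduct]
    calc ∑ i, 2 * M i j * (v i * u j) = 2 * u j * ∑ i, M i j * v i := by
          rw [Finset.mul_sum]; exact Finset.sum_congr rfl fun i _ => by ring
      _ = 2 * (u j * u j) := by rw [← hu]; ring
  have hv' : ∑ i, v i ^ 2 = 1 := by simpa [dotProduct, sq] using hv
  simp only [Matrix.sub_apply, vecMulVec_apply, sub_sq, Finset.sum_add_distrib,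
    Finset.sum_sub_distrib, mul_pow, ← Finset.mul_sum, ← Finset.sum_mul]
  rw [Finset.sum_comm (f := fun i j => 2 * M i j * (v i * u j))]
  simp only [hcross, hv', ← Finset.mul_sum, dotProduct, ← sq]
  ring

lemma transpose_mulVec_dotProduct_self_le (hv : v ⬝ᵥ v = 1) (heig : (M * Mᵀ) *ᵥ v = μ • v)
    (a : m → ℝ) :
    Mᵀ *ᵥ a ⬝ᵥ Mᵀ *ᵥ a
      ≤ μ * (v ⬝ᵥ a) ^ 2 + (∑ i, ∑ j, M i j ^ 2 - μ) * (a ⬝ᵥ a - (v ⬝ᵥ a) ^ 2) := by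
  set c := v ⬝ᵥ a
  set u := Mᵀ *ᵥ v
  set r := a - c • v
  have hu : u ⬝ᵥ u = μ := transpose_mulVec_dotProduct_self_of_mulVec_eq M hv heig
  have hvr : v ⬝ᵥ r = 0 := by
    simp [r, dotProduct_sub, hv, c]
  have hrr : r ⬝ᵥ r = a ⬝ᵥ a - c ^ 2 := by
    simp only [r, dotProduct_sub, sub_dotProduct, dotProduct_smul, smul_dotProduct, hv,
      smul_eq_mul, c, dotProduct_comm a v]
    ring
  have hsplit : Mᵀ *ᵥ a = c • u + Mᵀ *ᵥ r := by
    simp [r, mulVec_sub, mulVec_smul, u]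
  have hcross : u ⬝ᵥ Mᵀ *ᵥ r = 0 := by
    rw [dotProduct_mulVec, vecMul_transpose, mulVec_mulVec, heig, smul_dotProduct, hvr,
      smul_zero]
  -- As `r ⟂ v`, `Mᵀ r` is unchanged by deflating `M` to `M - v uᵀ`, whose squared Frobenius
  -- norm is `‖M‖_F² - μ`.
  have hdeflate : (M - vecMulVec v u)ᵀ *ᵥ r = Mᵀ *ᵥ r := by
    rw [transpose_sub, transpose_vecMulVec, sub_mulVec, vecMulVec_mulVec, hvr]
    simp
  have hfrob : ∑ i, ∑ j, (M - vecMulVec v u)ᵀ i j ^ 2 = ∑ i, ∑ j, M i j ^ 2 - μ := by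
    rw [Finset.sum_comm, ← hu]
    exact sum_sq_sub_vecMulVec_transpose_mulVec M hv
  have hrest := mulVec_dotProduct_self_le_sum_sq (M - vecMulVec v u)ᵀ r
  rw [hdeflate, hfrob, hrr] at hrest
  rw [hsplit]
  simp only [dotProduct_add, add_dotProduct, dotProduct_smul, smul_dotProduct, smul_eq_mul, hu,
    hcross, dotProduct_comm (Mᵀ *ᵥ r) u]
  nlinarith [hrest]

lemma sq_dotProduct_mulVec_le_of_half_lt [DecidableEq m] (hF : ∑ i, ∑ j, M i j ^ 2 = 1)
    (hv : v ⬝ᵥ v = 1) (heig : (M * Mᵀ) *ᵥ v = μ • v)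
    (hmax : ∀ (ν : ℝ) (x : m → ℝ), x ≠ 0 → (M * Mᵀ) *ᵥ x = ν • x → ν ≤ μ)
    {a : m → ℝ} {b : n → ℝ} (ha : a ⬝ᵥ a = 1) (hb : b ⬝ᵥ b = 1)
    (ht : 1 / 2 < (a ⬝ᵥ M *ᵥ b) ^ 2) :
    (a ⬝ᵥ M *ᵥ b) ^ 2 ≤ (v ⬝ᵥ a) ^ 2 := by
  have hB : (M * Mᵀ).IsHermitian := by
    simpa using isHermitian_mul_conjTranspose_self M
  have hCS : (a ⬝ᵥ M *ᵥ b) ^ 2 ≤ Mᵀ *ᵥ a ⬝ᵥ Mᵀ *ᵥ a := by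
    rw [dotProduct_mulVec, ← mulVec_transpose]
    simpa [hb] using sq_dotProduct_le (Mᵀ *ᵥ a) b
  have hRayleigh : Mᵀ *ᵥ a ⬝ᵥ Mᵀ *ᵥ a ≤ μ := by
    simpa [ha, transpose_mulVec_dotProduct_self] using hB.dotProduct_mulVec_le hmax a
  have hsplit := transpose_mulVec_dotProduct_self_le M hv heig a
  rw [hF, ha] at hsplit
  have hμ : μ ≤ 1 := by
    have := mulVec_dotProduct_self_le_sum_sq Mᵀ v
    simp only [transpose_apply] at this
    rwa [transpose_mulVec_dotProduct_self_of_mulVec_eq M hv heig, hv, mul_one,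
      Finset.sum_comm, hF] at this
  nlinarith [sq_nonneg (v ⬝ᵥ a)]

end TopEigenvector

theorem stmt3 (d₁ d₂ : ℕ)
    (Mmat : Matrix (Fin d₁) (Fin d₂) ℝ)
    (hMF : Real.sqrt (∑ i, ∑ j, (Mmat i j) ^ 2) = 1)
    (a : Fin d₁ → ℝ) (b : Fin d₂ → ℝ)
    (ha : ∑ i, (a i) ^ 2 = 1) (hb : ∑ j, (b j) ^ 2 = 1)
    (ahat : Fin d₁ → ℝ) (hahat : ∑ i, (ahat i) ^ 2 = 1)
    (μ : ℝ) (heig : (Mmat * Mmatᵀ).mulVec ahat = μ • ahat)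
    (hmax : ∀ (ν : ℝ) (x : Fin d₁ → ℝ), x ≠ 0 → (Mmat * Mmatᵀ).mulVec x = ν • x → ν ≤ μ)
    (vM vab : Fin d₁ × Fin d₂ → ℝ)
    (hvM : ∀ p, vM p = Mmat p.1 p.2) (hvab : ∀ p, vab p = a p.1 * b p.2) :
    min (specNorm (vecMulVec ahat ahat - vecMulVec a a) ^ 2) (1 / 2)
      ≤ specNorm (vecMulVec vM vM - vecMulVec vab vab) ^ 2 := by
  have hF : ∑ i, ∑ j, Mmat i j ^ 2 = 1 := (Real.sqrt_eq_one).mp hMF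
  have ha' : a ⬝ᵥ a = 1 := by simpa [dotProduct, sq] using ha
  have hb' : b ⬝ᵥ b = 1 := by simpa [dotProduct, sq] using hb
  have hahat' : ahat ⬝ᵥ ahat = 1 := by simpa [dotProduct, sq] using hahat
  have hvM' : vM ⬝ᵥ vM = 1 := by
    simpa [dotProduct, hvM, Fintype.sum_prod_type, sq] using hF
  have hvab' : vab ⬝ᵥ vab = 1 := by
    calc vab ⬝ᵥ vab = (a ⬝ᵥ a) * (b ⬝ᵥ b) := by
          simp [dotProduct, hvab, Fintype.sum_prod_type, mul_mul_mul_comm, ← Finset.mul_sum,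
            ← Finset.sum_mul]
      _ = 1 := by rw [ha', hb', mul_one]
  have ht : vM ⬝ᵥ vab = a ⬝ᵥ Mmat *ᵥ b := by
    simp only [dotProduct, mulVec, hvM, hvab, Fintype.sum_prod_type, Finset.mul_sum]
    exact Finset.sum_congr rfl fun _ _ => Finset.sum_congr rfl fun _ _ => by ring
  rw [specNorm_vecMulVec_sub_sq hahat' ha', specNorm_vecMulVec_sub_sq hvM' hvab', ht]
  by_cases hlarge : 1 / 2 < (a ⬝ᵥ Mmat *ᵥ b) ^ 2
  · have := sq_dotProduct_mulVec_le_of_half_lt Mmat hF hahat' heig hmax ha' hb' hlarge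
    exact min_le_of_left_le (by linarith)
  · exact min_le_of_right_le (by linarith)
end
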